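/- arXiv:0904.0308 — 6 statements merged into one kernel-verified Lean document; each statement's English description precedes it below -/
import Mathlib

section
/- Let {f_X} be a universal₂ family of hash functions from a finite set A to {1,…,M}, i.e., for all a₁ ≠ a₂ in A, the probability over X that f_X(a₁) = f_X(a₂) is at most 1/M. Then for any probability distribution P on A and any s ∈ (0,1], the expectation over X of ∑_{i=1}^M (P∘f_X⁻¹(i))^{1+s} is at most ∑_a P(a)^{1+s} + M^{-s}. -/
open Real Finset NNReal

/-- Subadditivity of `x ^ s` for `s ∈ [0,1]` on nonnegative reals. -/
lemma rpow_add_le_add_rpow_real {x y s : ℝ} (hx : 0 ≤ x) (hy : 0 ≤ y)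
    (hs0 : 0 ≤ s) (hs1 : s ≤ 1) : (x + y) ^ s ≤ x ^ s + y ^ s := by
  have h := NNReal.rpow_add_le_add_rpow x.toNNReal y.toNNReal hs0 hs1
  have hxy : ((x.toNNReal + y.toNNReal : ℝ≥0) : ℝ) = x + y := by
    simp [Real.coe_toNNReal _ hx, Real.coe_toNNReal _ hy]
  calc (x + y) ^ s = ((x.toNNReal + y.toNNReal : ℝ≥0) : ℝ) ^ s := by rw [hxy]
    _ = (((x.toNNReal + y.toNNReal) ^ s : ℝ≥0) : ℝ) := by
        rw [NNReal.coe_rpow]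
    _ ≤ ((x.toNNReal ^ s + y.toNNReal ^ s : ℝ≥0) : ℝ) := by exact_mod_cast h
    _ = x ^ s + y ^ s := by
        push_cast [NNReal.coe_rpow]
        rw [Real.coe_toNNReal _ hx, Real.coe_toNNReal _ hy]

/-- Jensen's inequality for the concave function `x ^ s`, `s ∈ [0,1]`. -/
lemma jensen_rpow {Ω : Type*} [Fintype Ω] (μ : Ω → ℝ) (hμ : ∀ ω, 0 ≤ μ ω)
    (hμ1 : ∑ ω, μ ω = 1) (g : Ω → ℝ) (hg : ∀ ω, 0 ≤ g ω) {s : ℝ}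
    (hs0 : 0 ≤ s) (hs1 : s ≤ 1) :
    ∑ ω, μ ω * g ω ^ s ≤ (∑ ω, μ ω * g ω) ^ s := by
  have hconc : ConcaveOn ℝ (Set.Ici 0) fun x : ℝ => x ^ s :=
    Real.concaveOn_rpow hs0 hs1
  have := hconc.le_map_sum (t := univ) (w := μ) (p := g)
    (fun ω _ => hμ ω) hμ1 (fun ω _ => hg ω)
  simpa [smul_eq_mul] using this

/-- Key lemma for Theorem 1: for a universal₂ hash family `f` from `A` to `Fin M`
(indexed by a random variable on `Ω` with distribution `μ`), any probability
distribution `P` on `A`, and `s ∈ (0,1]`,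
`E_X ∑_i (P∘f_X⁻¹(i))^{1+s} ≤ ∑_a P(a)^{1+s} + M^{-s}`. -/
theorem universal_hash_renyi_bound {A Ω : Type*} [Fintype A] [Fintype Ω] [DecidableEq A]
    (M : ℕ) (hM : 0 < M)
    (μ : Ω → ℝ) (hμ : ∀ ω, 0 ≤ μ ω) (hμ1 : ∑ ω, μ ω = 1)
    (f : Ω → A → Fin M)
    (huniv : ∀ a₁ a₂ : A, a₁ ≠ a₂ →
      ∑ ω ∈ univ.filter (fun ω => f ω a₁ = f ω a₂), μ ω ≤ 1 / M)
    (P : A → ℝ) (hP : ∀ a, 0 ≤ P a) (hP1 : ∑ a, P a = 1)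
    (s : ℝ) (hs0 : 0 < s) (hs1 : s ≤ 1) :
    ∑ ω, μ ω * ∑ i : Fin M, (∑ a ∈ univ.filter (fun a => f ω a = i), P a) ^ (1 + s)
      ≤ (∑ a, P a ^ (1 + s)) + (M : ℝ) ^ (-s) := by
  classical
  -- notation: T ω i = mass of fiber i; C ω a = collision mass with a
  set T : Ω → Fin M → ℝ := fun ω i => ∑ a ∈ univ.filter (fun a => f ω a = i), P a with hT
  set C : Ω → A → ℝ := fun ω a => ∑ a' ∈ univ.filter (fun a' => a' ≠ a ∧ f ω a' = f ω a), P a'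
    with hC
  have hTnn : ∀ ω i, 0 ≤ T ω i := fun ω i => Finset.sum_nonneg fun a _ => hP a
  have hCnn : ∀ ω a, 0 ≤ C ω a := fun ω a => Finset.sum_nonneg fun a' _ => hP a'
  have h1s : (0:ℝ) < 1 + s := by linarith
  -- decompose the fiber of a: T ω (f ω a) = P a + C ω a
  have hdecomp : ∀ ω a, T ω (f ω a) = P a + C ω a := by
    intro ω a
    have : (univ.filter (fun a' => f ω a' = f ω a)) =
        insert a (univ.filter (fun a' => a' ≠ a ∧ f ω a' = f ω a)) := by
      ext a'
      by_cases h : a' = a <;> simp [Finset.mem_filter, h]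
    rw [hT]
    simp only []
    rw [this, Finset.sum_insert (by simp [Finset.mem_filter])]
  -- pointwise (in ω) bound
  have hpt : ∀ ω, ∑ i : Fin M, (T ω i) ^ (1 + s)
      ≤ ∑ a, P a ^ (1 + s) + ∑ a, P a * (C ω a) ^ s := by
    intro ω
    have step1 : ∑ i : Fin M, (T ω i) ^ (1 + s) = ∑ a, P a * (T ω (f ω a)) ^ s := by
      rw [← Finset.sum_fiberwise univ (f ω) (fun a => P a * (T ω (f ω a)) ^ s)]
      refine Finset.sum_congr rfl fun i _ => ?_
      have : ∑ a ∈ univ.filter (fun a => f ω a = i), P a * (T ω (f ω a)) ^ s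
          = ∑ a ∈ univ.filter (fun a => f ω a = i), P a * (T ω i) ^ s := by
        refine Finset.sum_congr rfl fun a ha => ?_
        rw [(Finset.mem_filter.mp ha).2]
      rw [this, ← Finset.sum_mul]
      rw [← Real.rpow_one_add' (hTnn ω i) (by positivity)]
    rw [step1, ← Finset.sum_add_distrib]
    refine Finset.sum_le_sum fun a _ => ?_
    rw [hdecomp ω a]
    have hsub : (P a + C ω a) ^ s ≤ P a ^ s + (C ω a) ^ s :=
      rpow_add_le_add_rpow_real (hP a) (hCnn ω a) hs0.le hs1
    calc P a * (P a + C ω a) ^ s ≤ P a * (P a ^ s + (C ω a) ^ s) :=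
          mul_le_mul_of_nonneg_left hsub (hP a)
      _ = P a ^ (1 + s) + P a * (C ω a) ^ s := by
          rw [mul_add, ← Real.rpow_one_add' (hP a) (by positivity)]
  -- take expectation
  have hE : ∑ ω, μ ω * ∑ i : Fin M, (T ω i) ^ (1 + s)
      ≤ ∑ a, P a ^ (1 + s) + ∑ a, P a * ∑ ω, μ ω * (C ω a) ^ s := by
    calc ∑ ω, μ ω * ∑ i : Fin M, (T ω i) ^ (1 + s)
        ≤ ∑ ω, μ ω * (∑ a, P a ^ (1 + s) + ∑ a, P a * (C ω a) ^ s) :=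
          Finset.sum_le_sum fun ω _ => mul_le_mul_of_nonneg_left (hpt ω) (hμ ω)
      _ = (∑ ω, μ ω) * (∑ a, P a ^ (1 + s)) + ∑ ω, μ ω * ∑ a, P a * (C ω a) ^ s := by
          simp [mul_add, Finset.sum_add_distrib, Finset.sum_mul]
      _ = ∑ a, P a ^ (1 + s) + ∑ a, P a * ∑ ω, μ ω * (C ω a) ^ s := by
          rw [hμ1, one_mul]
          congr 1
          simp only [Finset.mul_sum]
          rw [Finset.sum_comm]
          refine Finset.sum_congr rfl fun a _ => Finset.sum_congr rfl fun ω _ => by ring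
  refine hE.trans ?_
  gcongr
  -- bound the collision term: ∑ ω, μ ω * (C ω a)^s ≤ M^{-s}
  have key : ∀ a, ∑ ω, μ ω * (C ω a) ^ s ≤ (M : ℝ) ^ (-s) := by
    intro a
    have hjen := jensen_rpow μ hμ hμ1 (fun ω => C ω a) (fun ω => hCnn ω a) hs0.le hs1
    refine hjen.trans ?_
    have hmean : ∑ ω, μ ω * C ω a ≤ 1 / M := by
      have swap : ∑ ω, μ ω * C ω a
          = ∑ a' ∈ univ.filter (fun a' => a' ≠ a), P a' *
              ∑ ω ∈ univ.filter (fun ω => f ω a' = f ω a), μ ω := by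
        rw [hC]
        simp only []
        calc ∑ ω, μ ω * ∑ a' ∈ univ.filter (fun a' => a' ≠ a ∧ f ω a' = f ω a), P a'
            = ∑ ω, ∑ a' ∈ univ.filter (fun a' => a' ≠ a),
                (if f ω a' = f ω a then μ ω * P a' else 0) := by
              refine Finset.sum_congr rfl fun ω _ => ?_
              rw [Finset.mul_sum]
              rw [Finset.sum_filter, Finset.sum_filter]
              refine Finset.sum_congr rfl fun a' _ => ?_
              by_cases h1 : a' = a <;> by_cases h2 : f ω a' = f ω a <;> simp [h1, h2]
          _ = ∑ a' ∈ univ.filter (fun a' => a' ≠ a),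
                ∑ ω, (if f ω a' = f ω a then μ ω * P a' else 0) := Finset.sum_comm
          _ = _ := by
              refine Finset.sum_congr rfl fun a' _ => ?_
              rw [Finset.mul_sum, Finset.sum_filter]
              refine Finset.sum_congr rfl fun ω _ => ?_
              by_cases h2 : f ω a' = f ω a <;> simp [h2, mul_comm]
      rw [swap]
      calc ∑ a' ∈ univ.filter (fun a' => a' ≠ a), P a' *
              ∑ ω ∈ univ.filter (fun ω => f ω a' = f ω a), μ ω
          ≤ ∑ a' ∈ univ.filter (fun a' => a' ≠ a), P a' * (1 / M) := by
            refine Finset.sum_le_sum fun a' ha' => ?_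
            exact mul_le_mul_of_nonneg_left
              (huniv a' a (Finset.mem_filter.mp ha').2) (hP a')
        _ = (∑ a' ∈ univ.filter (fun a' => a' ≠ a), P a') * (1 / M) := by
            rw [Finset.sum_mul]
        _ ≤ 1 * (1 / M) := by
            refine mul_le_mul_of_nonneg_right ?_ (by positivity)
            rw [← hP1]
            exact Finset.sum_le_sum_of_subset_of_nonneg (Finset.filter_subset _ _)
              (fun a' _ _ => hP a')
        _ = 1 / M := one_mul _
    calc (∑ ω, μ ω * C ω a) ^ s ≤ (1 / M : ℝ) ^ s := by
          refine Real.rpow_le_rpow (Finset.sum_nonneg fun ω _ =>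
            mul_nonneg (hμ ω) (hCnn ω a)) hmean hs0.le
      _ = (M : ℝ) ^ (-s) := by
          rw [one_div, ← Real.rpow_neg_one, ← Real.rpow_mul (Nat.cast_nonneg M)]
          norm_num
  calc ∑ a, P a * ∑ ω, μ ω * (C ω a) ^ s
      ≤ ∑ a, P a * (M : ℝ) ^ (-s) := by
        refine Finset.sum_le_sum fun a _ => mul_le_mul_of_nonneg_left (key a) (hP a)
    _ = (M : ℝ) ^ (-s) := by rw [← Finset.sum_mul, hP1, one_mul]
end

section
/- Let {f_X} be a universal₂ family of hash functions from a finite set A to {1,…,M}. Then for any joint distribution P^{A,E} on A × E (E finite) and any s ∈ (0,1], the expected conditional Shannon entropy satisfies E_X H(f_X(A)|E) ≥ log M − (1/s)·M^s·e^{−H̃_{1+s}(A|E)}, where H̃_{1+s}(A|E) := −log ∑_{a,e} P^{A,E}(a,e)^{1+s} P^E(e)^{−s}. -/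
/-!
For a single hash function `g`, the elementary inequality `log x ≤ (x ^ s - 1) / s` applied to
`x = M · P(g(A) = b, e) / P(e)` bounds `H(g(A)|E)` below by `log M - (M ^ s · S_g - 1) / s`, where
`S_g = ∑ P_{g(A)E}^{1+s} (P^E)^{-s}`. Averaging over the family, write the mass of the bucket of `a`
as `P(a, e)` plus the mass of the other elements colliding with `a`; subadditivity of `x ↦ x ^ s`,
Jensen for this concave map and universality (each collision has probability at most `1/M`) give
`E_X S_{f_X} ≤ ∑ P^{1+s} (P^E)^{-s} + M ^ (-s)`, which is the claim.
-/

open Real Finset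

noncomputable section

variable {A B E Ω : Type*}

def marginal [Fintype A] (P : A × E → ℝ) (e : E) : ℝ := ∑ a, P (a, e)

def condEntropy [Fintype A] [Fintype E] (P : A × E → ℝ) : ℝ :=
  -∑ a, ∑ e, P (a, e) * log (P (a, e) / marginal P e)

/-- `condRenyiSum s P = exp (-s · H̃_{1+s}(A|E))`. -/
def condRenyiSum [Fintype A] [Fintype E] (s : ℝ) (P : A × E → ℝ) : ℝ :=
  ∑ a, ∑ e, P (a, e) ^ (1 + s) * marginal P e ^ (-s)

/-- The joint distribution of `(g(A), E)`. -/
def pushFst [Fintype A] [DecidableEq B] (g : A → B) (P : A × E → ℝ) : B × E → ℝ :=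
  fun p => ∑ a ∈ univ.filter (fun a => g a = p.1), P (a, p.2)

lemma sum_marginal [Fintype A] [Fintype E] (P : A × E → ℝ) : ∑ e, marginal P e = ∑ p, P p := by
  rw [Fintype.sum_prod_type, Finset.sum_comm]
  rfl

lemma le_marginal [Fintype A] {P : A × E → ℝ} (hP : ∀ p, 0 ≤ P p) (a : A) (e : E) :
    P (a, e) ≤ marginal P e :=
  single_le_sum (f := fun a' => P (a', e)) (fun _ _ => hP _) (mem_univ a)

lemma marginal_pushFst [Fintype A] [Fintype B] [DecidableEq B] (g : A → B) (P : A × E → ℝ) :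
    marginal (pushFst g P) = marginal P :=
  funext fun e => sum_fiberwise _ g fun a => P (a, e)

lemma pushFst_nonneg [Fintype A] [DecidableEq B] (g : A → B) {P : A × E → ℝ}
    (hP : ∀ p, 0 ≤ P p) (p : B × E) : 0 ≤ pushFst g P p :=
  sum_nonneg fun _ _ => hP _

lemma sum_pushFst [Fintype A] [Fintype B] [Fintype E] [DecidableEq B] (g : A → B)
    (P : A × E → ℝ) : ∑ p, pushFst g P p = ∑ p, P p := by
  rw [← sum_marginal, marginal_pushFst, sum_marginal]

lemma mul_log_sub_le_neg_mul_log_div {m s q w : ℝ} (hm : 0 < m) (hs : 0 < s) (hq : 0 ≤ q)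
    (hqw : q ≤ w) :
    q * log m - (m ^ s * q ^ (1 + s) * w ^ (-s) - q) / s ≤ -(q * log (q / w)) := by
  rcases hq.eq_or_lt with rfl | hq
  · simp [zero_rpow (by positivity : (1 : ℝ) + s ≠ 0)]
  have hw : 0 < w := hq.trans_le hqw
  set x := m * q / w
  have hx : 0 < x := by positivity
  have hlog : s * log x ≤ x ^ s - 1 := by
    rw [← log_rpow hx]
    exact log_le_sub_one_of_pos (rpow_pos_of_pos hx s)
  have hpow : m ^ s * q ^ (1 + s) * w ^ (-s) = q * x ^ s := by
    rw [div_rpow (by positivity) hw.le, mul_rpow hm.le hq.le, rpow_neg hw.le, rpow_add hq,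
      rpow_one]
    field_simp
  have hsplit : log (q / w) = log x - log m := by
    rw [show x = m * (q / w) by ring, log_mul hm.ne' (by positivity)]
    ring
  rw [hpow, hsplit, sub_le_iff_le_add, ← sub_le_iff_le_add', le_div_iff₀ hs]
  nlinarith [mul_le_mul_of_nonneg_left hlog hq.le]

lemma log_sub_condRenyiSum_le_condEntropy [Fintype B] [Fintype E] {Q : B × E → ℝ}
    (hQ : ∀ p, 0 ≤ Q p) (hQ1 : ∑ p, Q p = 1) {m s : ℝ} (hm : 0 < m) (hs : 0 < s) :
    log m - (m ^ s * condRenyiSum s Q - 1) / s ≤ condEntropy Q := by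
  have hQ1' : ∑ b, ∑ e, Q (b, e) = 1 := by rwa [← Fintype.sum_prod_type]
  calc log m - (m ^ s * condRenyiSum s Q - 1) / s
      = ∑ b, ∑ e, (Q (b, e) * log m
          - (m ^ s * Q (b, e) ^ (1 + s) * marginal Q e ^ (-s) - Q (b, e)) / s) := by
        simp only [condRenyiSum, sum_sub_distrib, ← sum_div, ← sum_mul, mul_sum, mul_assoc, hQ1']
        ring
    _ ≤ ∑ b, ∑ e, -(Q (b, e) * log (Q (b, e) / marginal Q e)) :=
        sum_le_sum fun b _ => sum_le_sum fun e _ =>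
          mul_log_sub_le_neg_mul_log_div hm hs (hQ _) (le_marginal hQ b e)
    _ = condEntropy Q := by simp only [condEntropy, sum_neg_distrib]

lemma log_sub_sum_mul_condRenyiSum_le_sum_mul_condEntropy [Fintype B] [Fintype E] [Fintype Ω]
    {μ : Ω → ℝ} (hμ : ∀ ω, 0 ≤ μ ω) (hμ1 : ∑ ω, μ ω = 1) {Q : Ω → B × E → ℝ}
    (hQ : ∀ ω p, 0 ≤ Q ω p) (hQ1 : ∀ ω, ∑ p, Q ω p = 1) {m s : ℝ} (hm : 0 < m) (hs : 0 < s) :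
    log m - (m ^ s * ∑ ω, μ ω * condRenyiSum s (Q ω) - 1) / s
      ≤ ∑ ω, μ ω * condEntropy (Q ω) := by
  have hterm : ∀ ω, μ ω * (log m - (m ^ s * condRenyiSum s (Q ω) - 1) / s)
      = μ ω * (log m + 1 / s) - m ^ s / s * (μ ω * condRenyiSum s (Q ω)) := fun ω => by ring
  calc log m - (m ^ s * ∑ ω, μ ω * condRenyiSum s (Q ω) - 1) / s
      = ∑ ω, μ ω * (log m - (m ^ s * condRenyiSum s (Q ω) - 1) / s) := by
        rw [sum_congr rfl fun ω _ => hterm ω, sum_sub_distrib, ← sum_mul, ← mul_sum, hμ1]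
        ring
    _ ≤ ∑ ω, μ ω * condEntropy (Q ω) :=
        sum_le_sum fun ω _ => mul_le_mul_of_nonneg_left
          (log_sub_condRenyiSum_le_condEntropy (hQ ω) (hQ1 ω) hm hs) (hμ ω)

def IsAlmostUniversal [Fintype Ω] [DecidableEq B] (μ : Ω → ℝ) (f : Ω → A → B) (δ : ℝ) : Prop :=
  ∀ a₁ a₂ : A, a₁ ≠ a₂ → ∑ ω ∈ univ.filter (fun ω => f ω a₁ = f ω a₂), μ ω ≤ δ

lemma sum_rpow_one_add_fiber [Fintype A] [Fintype B] [DecidableEq B] (g : A → B) {p : A → ℝ}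
    (hp : ∀ a, 0 ≤ p a) {s : ℝ} (hs : 1 + s ≠ 0) :
    ∑ b, (∑ a ∈ univ.filter (fun a => g a = b), p a) ^ (1 + s)
      = ∑ a, p a * (∑ a' ∈ univ.filter (fun a' => g a' = g a), p a') ^ s := by
  calc ∑ b, (∑ a ∈ univ.filter (fun a => g a = b), p a) ^ (1 + s)
      = ∑ b, ∑ a ∈ univ.filter (fun a => g a = b),
          p a * (∑ a' ∈ univ.filter (fun a' => g a' = b), p a') ^ s := by
        refine sum_congr rfl fun b _ => ?_
        rw [rpow_add' (sum_nonneg fun a _ => hp a) hs, rpow_one, sum_mul]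
    _ = ∑ b, ∑ a ∈ univ.filter (fun a => g a = b),
          p a * (∑ a' ∈ univ.filter (fun a' => g a' = g a), p a') ^ s :=
        sum_congr rfl fun b _ => sum_congr rfl fun a ha => by rw [(mem_filter.1 ha).2]
    _ = _ := sum_fiberwise _ g _

def collisionMass [Fintype A] [DecidableEq A] [DecidableEq B] (g : A → B) (p : A → ℝ) (a : A) :
    ℝ :=
  ∑ a' ∈ (univ.erase a).filter (fun a' => g a' = g a), p a'

lemma collisionMass_nonneg [Fintype A] [DecidableEq A] [DecidableEq B] (g : A → B) {p : A → ℝ}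
    (hp : ∀ a, 0 ≤ p a) (a : A) : 0 ≤ collisionMass g p a :=
  sum_nonneg fun _ _ => hp _

lemma sum_fiber_eq_add_collisionMass [Fintype A] [DecidableEq A] [DecidableEq B] (g : A → B)
    (p : A → ℝ) (a : A) :
    ∑ a' ∈ univ.filter (fun a' => g a' = g a), p a'
      = p a + collisionMass g p a := by
  rw [collisionMass, filter_erase, add_sum_erase _ _ (by simp)]

lemma sum_rpow_one_add_fiber_le [Fintype A] [Fintype B] [DecidableEq A] [DecidableEq B]
    (g : A → B) {p : A → ℝ} (hp : ∀ a, 0 ≤ p a) {s : ℝ} (hs0 : 0 < s) (hs1 : s ≤ 1) :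
    ∑ b, (∑ a ∈ univ.filter (fun a => g a = b), p a) ^ (1 + s)
      ≤ ∑ a, p a ^ (1 + s)
        + ∑ a, p a * collisionMass g p a ^ s := by
  rw [sum_rpow_one_add_fiber g hp (by linarith)]
  simp only [rpow_add' (hp _) (by linarith : 1 + s ≠ 0), rpow_one, ← sum_add_distrib, ← mul_add]
  refine sum_le_sum fun a _ => mul_le_mul_of_nonneg_left ?_ (hp a)
  rw [sum_fiber_eq_add_collisionMass]
  exact rpow_add_le_add_rpow (hp a) (collisionMass_nonneg g hp a) hs0.le hs1

lemma sum_mul_collisionMass_le [Fintype A] [Fintype Ω] [DecidableEq A] [DecidableEq B]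
    {μ : Ω → ℝ} {f : Ω → A → B} {δ : ℝ} (hδ : 0 ≤ δ)
    (huniv : IsAlmostUniversal μ f δ)
    {p : A → ℝ} (hp : ∀ a, 0 ≤ p a) (a : A) :
    ∑ ω, μ ω * collisionMass (f ω) p a ≤ δ * ∑ a', p a' := by
  calc ∑ ω, μ ω * collisionMass (f ω) p a
      = ∑ a' ∈ univ.erase a, (∑ ω ∈ univ.filter (fun ω => f ω a' = f ω a), μ ω) * p a' := by
        simp only [collisionMass, sum_filter, mul_sum, sum_mul]
        rw [sum_comm]
        refine sum_congr rfl fun a' _ => sum_congr rfl fun ω _ => ?_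
        split_ifs <;> simp
    _ ≤ ∑ a' ∈ univ.erase a, δ * p a' :=
        sum_le_sum fun a' ha' =>
          mul_le_mul_of_nonneg_right (huniv a' a (mem_erase.1 ha').1) (hp a')
    _ ≤ δ * ∑ a', p a' := by
        rw [← mul_sum]
        exact mul_le_mul_of_nonneg_left
          (sum_le_sum_of_subset_of_nonneg (subset_univ _) fun _ _ _ => hp _) hδ

lemma sum_mul_rpow_le_rpow_sum_mul [Fintype Ω] {μ x : Ω → ℝ} (hμ : ∀ ω, 0 ≤ μ ω)
    (hμ1 : ∑ ω, μ ω = 1) (hx : ∀ ω, 0 ≤ x ω) {s : ℝ} (hs0 : 0 ≤ s) (hs1 : s ≤ 1) :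
    ∑ ω, μ ω * x ω ^ s ≤ (∑ ω, μ ω * x ω) ^ s := by
  simpa only [smul_eq_mul] using
    (concaveOn_rpow hs0 hs1).le_map_sum (t := univ) (fun ω _ => hμ ω) hμ1
      fun ω _ => Set.mem_Ici.2 (hx ω)

lemma sum_mul_sum_rpow_one_add_fiber_le [Fintype A] [Fintype B] [Fintype Ω] [DecidableEq B]
    {μ : Ω → ℝ} (hμ : ∀ ω, 0 ≤ μ ω) (hμ1 : ∑ ω, μ ω = 1) {f : Ω → A → B} {δ : ℝ} (hδ : 0 ≤ δ)
    (huniv : IsAlmostUniversal μ f δ)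
    {p : A → ℝ} (hp : ∀ a, 0 ≤ p a) {s : ℝ} (hs0 : 0 < s) (hs1 : s ≤ 1) :
    ∑ ω, μ ω * ∑ b, (∑ a ∈ univ.filter (fun a => f ω a = b), p a) ^ (1 + s)
      ≤ ∑ a, p a ^ (1 + s) + (∑ a, p a) * (δ * ∑ a, p a) ^ s := by
  classical
  have hJensen : ∀ a, ∑ ω, μ ω * collisionMass (f ω) p a ^ s ≤ (δ * ∑ a, p a) ^ s := fun a =>
    (sum_mul_rpow_le_rpow_sum_mul hμ hμ1 (fun ω => collisionMass_nonneg (f ω) hp a) hs0.le hs1).trans <|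
      rpow_le_rpow (sum_nonneg fun ω _ => mul_nonneg (hμ ω) (collisionMass_nonneg (f ω) hp a))
        (sum_mul_collisionMass_le hδ huniv hp a) hs0.le
  calc ∑ ω, μ ω * ∑ b, (∑ a ∈ univ.filter (fun a => f ω a = b), p a) ^ (1 + s)
      ≤ ∑ ω, μ ω * (∑ a, p a ^ (1 + s) + ∑ a, p a * collisionMass (f ω) p a ^ s) :=
        sum_le_sum fun ω _ => mul_le_mul_of_nonneg_left
          (sum_rpow_one_add_fiber_le (f ω) hp hs0 hs1) (hμ ω)
    _ = ∑ a, p a ^ (1 + s) + ∑ a, p a * ∑ ω, μ ω * collisionMass (f ω) p a ^ s := by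
        simp only [mul_add, sum_add_distrib]
        rw [← sum_mul, hμ1, one_mul]
        simp only [mul_sum]
        rw [sum_comm (f := fun ω a => μ ω * (p a * collisionMass (f ω) p a ^ s))]
        simp only [mul_left_comm]
    _ ≤ ∑ a, p a ^ (1 + s) + ∑ a, p a * (δ * ∑ a, p a) ^ s := by
        gcongr with a
        exacts [hp a, hJensen a]
    _ = ∑ a, p a ^ (1 + s) + (∑ a, p a) * (δ * ∑ a, p a) ^ s := by rw [sum_mul]

lemma mul_mul_rpow_mul_rpow_neg {w δ s : ℝ} (hw : 0 ≤ w) (hδ : 0 ≤ δ) :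
    w * (δ * w) ^ s * w ^ (-s) = δ ^ s * w := by
  rcases hw.eq_or_lt with rfl | hw
  · simp
  rw [mul_rpow hδ hw.le, rpow_neg hw.le]
  field_simp

lemma condRenyiSum_pushFst [Fintype A] [Fintype B] [Fintype E] [DecidableEq B] (g : A → B)
    (P : A × E → ℝ) (s : ℝ) :
    condRenyiSum s (pushFst g P)
      = ∑ e, (∑ b, (∑ a ∈ univ.filter (fun a => g a = b), P (a, e)) ^ (1 + s))
          * marginal P e ^ (-s) := by
  rw [condRenyiSum, marginal_pushFst, sum_comm]
  simp only [sum_mul]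
  rfl

lemma sum_mul_condRenyiSum_pushFst_le [Fintype A] [Fintype B] [Fintype E] [Fintype Ω]
    [DecidableEq B] {μ : Ω → ℝ} (hμ : ∀ ω, 0 ≤ μ ω) (hμ1 : ∑ ω, μ ω = 1) {f : Ω → A → B}
    {δ : ℝ} (hδ : 0 ≤ δ)
    (huniv : IsAlmostUniversal μ f δ)
    {P : A × E → ℝ} (hP : ∀ p, 0 ≤ P p) {s : ℝ} (hs0 : 0 < s) (hs1 : s ≤ 1) :
    ∑ ω, μ ω * condRenyiSum s (pushFst (f ω) P) ≤ condRenyiSum s P + δ ^ s * ∑ p, P p := by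
  have hW : ∀ e, 0 ≤ marginal P e := fun e => sum_nonneg fun _ _ => hP _
  calc ∑ ω, μ ω * condRenyiSum s (pushFst (f ω) P)
      = ∑ e, (∑ ω, μ ω * ∑ b, (∑ a ∈ univ.filter (fun a => f ω a = b), P (a, e)) ^ (1 + s))
          * marginal P e ^ (-s) := by
        simp only [condRenyiSum_pushFst, mul_sum]
        rw [sum_comm]
        simp only [sum_mul, mul_sum, mul_assoc]
    _ ≤ ∑ e, (∑ a, P (a, e) ^ (1 + s) + marginal P e * (δ * marginal P e) ^ s)
          * marginal P e ^ (-s) :=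
        sum_le_sum fun e _ => mul_le_mul_of_nonneg_right
          (sum_mul_sum_rpow_one_add_fiber_le hμ hμ1 hδ huniv (fun _ => hP _) hs0 hs1)
          (rpow_nonneg (hW e) _)
    _ = condRenyiSum s P + δ ^ s * ∑ p, P p := by
        simp only [add_mul, sum_add_distrib, mul_mul_rpow_mul_rpow_neg (hW _) hδ,
          ← mul_sum, sum_marginal, condRenyiSum, sum_mul]
        rw [sum_comm]

end

theorem expected_cond_entropy_hash_bound_general
    {A E Ω : Type*} [Fintype A] [Fintype E] [Fintype Ω]
    (M : ℕ) (hM : 0 < M)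
    (μ : Ω → ℝ) (hμ : ∀ ω, 0 ≤ μ ω) (hμ1 : ∑ ω, μ ω = 1)
    (f : Ω → A → Fin M)
    (huniv : ∀ a₁ a₂ : A, a₁ ≠ a₂ →
      ∑ ω ∈ univ.filter (fun ω => f ω a₁ = f ω a₂), μ ω ≤ 1 / M)
    (P : A × E → ℝ) (hP : ∀ p, 0 ≤ P p) (hP1 : ∑ p, P p = 1)
    (s : ℝ) (hs0 : 0 < s) (hs1 : s ≤ 1) :
    Real.log M - (1 / s) * (M : ℝ) ^ s *
        Real.exp (-(-Real.log (∑ a, ∑ e, P (a, e) ^ (1 + s) * (∑ a', P (a', e)) ^ (-s))))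
      ≤ ∑ ω, μ ω *
          (-∑ i : Fin M, ∑ e,
            (∑ a ∈ univ.filter (fun a => f ω a = i), P (a, e)) *
              Real.log ((∑ a ∈ univ.filter (fun a => f ω a = i), P (a, e)) /
                (∑ a', P (a', e)))) := by
  have hMpos : (0 : ℝ) < M := Nat.cast_pos.2 hM
  have hcollision : ∑ ω, μ ω * condRenyiSum s (pushFst (f ω) P)
      ≤ condRenyiSum s P + (1 / M : ℝ) ^ s := by
    simpa only [hP1, mul_one] using
      sum_mul_condRenyiSum_pushFst_le hμ hμ1 (by positivity) huniv hP hs0 hs1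
  have hMs : (M : ℝ) ^ s * (1 / M : ℝ) ^ s = 1 := by
    rw [← mul_rpow hMpos.le (by positivity), mul_one_div_cancel hMpos.ne', one_rpow]
  rw [neg_neg]
  calc log M - 1 / s * (M : ℝ) ^ s * exp (log (condRenyiSum s P))
      ≤ log M - 1 / s * (M : ℝ) ^ s * condRenyiSum s P := by
        -- `exp (log x) = x` only for `x > 0`; the inequality spares proving `condRenyiSum s P > 0`.
        gcongr
        exact le_exp_log _
    _ ≤ log M - ((M : ℝ) ^ s * ∑ ω, μ ω * condRenyiSum s (pushFst (f ω) P) - 1) / s := by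
        have := mul_le_mul_of_nonneg_left hcollision (rpow_nonneg hMpos.le s)
        rw [mul_add, hMs] at this
        rw [sub_le_sub_iff_left, div_le_iff₀ hs0]
        field_simp
        linarith
    _ ≤ ∑ ω, μ ω * condEntropy (pushFst (f ω) P) :=
        log_sub_sum_mul_condRenyiSum_le_sum_mul_condEntropy hμ hμ1 (fun ω => pushFst_nonneg _ hP)
          (fun ω => by rw [sum_pushFst, hP1]) hMpos hs0
    _ = _ := by simp only [condEntropy, marginal_pushFst]; rfl

/-- Theorem 1 of the paper: for a universal₂ hash family `f` from `A` to `Fin M`,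
a joint distribution `P` on `A × E`, and `s ∈ (0,1]`,
`E_X H(f_X(A)|E) ≥ log M − (1/s)·M^s·e^{−H̃_{1+s}(A|E)}`, where
`H̃_{1+s}(A|E) = −log ∑_{a,e} P(a,e)^{1+s} P^E(e)^{−s}`. -/
theorem expected_cond_entropy_hash_bound
    {A E Ω : Type*} [Fintype A] [Fintype E] [Fintype Ω] [DecidableEq A]
    (M : ℕ) (hM : 0 < M)
    (μ : Ω → ℝ) (hμ : ∀ ω, 0 ≤ μ ω) (hμ1 : ∑ ω, μ ω = 1)
    (f : Ω → A → Fin M)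
    (huniv : ∀ a₁ a₂ : A, a₁ ≠ a₂ →
      ∑ ω ∈ univ.filter (fun ω => f ω a₁ = f ω a₂), μ ω ≤ 1 / M)
    (P : A × E → ℝ) (hP : ∀ p, 0 ≤ P p) (hP1 : ∑ p, P p = 1)
    (s : ℝ) (hs0 : 0 < s) (hs1 : s ≤ 1) :
    Real.log M - (1 / s) * (M : ℝ) ^ s *
        Real.exp (-(-Real.log (∑ a, ∑ e, P (a, e) ^ (1 + s) * (∑ a', P (a', e)) ^ (-s))))
      ≤ ∑ ω, μ ω *
          (-∑ i : Fin M, ∑ e,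
            (∑ a ∈ univ.filter (fun a => f ω a = i), P (a, e)) *
              Real.log ((∑ a ∈ univ.filter (fun a => f ω a = i), P (a, e)) /
                (∑ a', P (a', e)))) :=
  expected_cond_entropy_hash_bound_general M hM μ hμ hμ1 f huniv P hP hP1 s hs0 hs1
end

section
/- For any channel W from a finite set X to a finite set Y, any input distribution p, and any s ∈ (0,1), the inequality e^{ψ(s|W,p)} ≤ e^{φ(s|W,p)} holds, where e^{ψ(s|W,p)} = ∑_y (∑_x p(x) W_x(y)^{1+s}) W_p(y)^{−s} and e^{φ(s|W,p)} = ∑_y (∑_x p(x) W_x(y)^{1/(1−s)})^{1−s}. -/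
open Real Finset

/-!
For each output `y`, Hölder's inequality for the measure `p` on `X`, with exponents `1/(1-s)` and
`1/s`, applied to `W_x(y) · W_x(y)^s`, gives
`∑_x p(x) W_x(y)^{1+s} ≤ (∑_x p(x) W_x(y)^{1/(1-s)})^{1-s} · W_p(y)^s`;
dividing by `W_p(y)^s` and summing over `y` proves the inequality.
-/

theorem inner_le_weight_Lp_mul_Lq_of_nonneg {ι : Type*} (s : Finset ι) {p q : ℝ}
    (hpq : p.HolderConjugate q) {w f g : ι → ℝ} (hw : ∀ i ∈ s, 0 ≤ w i)
    (hf : ∀ i ∈ s, 0 ≤ f i) (hg : ∀ i ∈ s, 0 ≤ g i) :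
    ∑ i ∈ s, w i * (f i * g i)
      ≤ (∑ i ∈ s, w i * f i ^ p) ^ (1 / p) * (∑ i ∈ s, w i * g i ^ q) ^ (1 / q) := by
  have split_weight :
      ∀ i ∈ s, w i ^ (1 / p) * f i * (w i ^ (1 / q) * g i) = w i * (f i * g i) := by
    intro i hi
    rw [mul_mul_mul_comm, ← rpow_add' (hw i hi) (by rw [hpq.one_div_add_one_div]; norm_num),
      hpq.one_div_add_one_div, div_one, rpow_one]
  have rpow_weighted : ∀ {r : ℝ} {h : ι → ℝ}, 0 < r → (∀ i ∈ s, 0 ≤ h i) →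
      ∀ i ∈ s, (w i ^ (1 / r) * h i) ^ r = w i * h i ^ r := by
    intro r h hr hh i hi
    rw [mul_rpow (rpow_nonneg (hw i hi) _) (hh i hi), ← rpow_mul (hw i hi),
      one_div_mul_cancel hr.ne', rpow_one]
  have holder := inner_le_Lp_mul_Lq_of_nonneg s hpq (f := fun i => w i ^ (1 / p) * f i)
    (g := fun i => w i ^ (1 / q) * g i) (fun i hi => mul_nonneg (rpow_nonneg (hw i hi) _) (hf i hi))
    (fun i hi => mul_nonneg (rpow_nonneg (hw i hi) _) (hg i hi))
  rwa [sum_congr rfl split_weight, sum_congr rfl (rpow_weighted hpq.pos hf),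
    sum_congr rfl (rpow_weighted hpq.symm.pos hg)] at holder

theorem sum_mul_rpow_one_add_le {ι : Type*} (s : Finset ι) {w f : ι → ℝ}
    (hw : ∀ i ∈ s, 0 ≤ w i) (hf : ∀ i ∈ s, 0 ≤ f i) {t : ℝ} (ht0 : 0 < t) (ht1 : t < 1) :
    ∑ i ∈ s, w i * f i ^ (1 + t)
      ≤ (∑ i ∈ s, w i * f i ^ (1 / (1 - t))) ^ (1 - t) * (∑ i ∈ s, w i * f i) ^ t := by
  have hpq : (1 / (1 - t)).HolderConjugate (1 / t) := by
    simpa only [one_div] using HolderConjugate.one_sub_inv_inv ht0 ht1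
  have holder := inner_le_weight_Lp_mul_Lq_of_nonneg s hpq hw hf
    (fun i hi => rpow_nonneg (hf i hi) t)
  have mul_rpow_self : ∀ i ∈ s, w i * (f i * f i ^ t) = w i * f i ^ (1 + t) := fun i hi => by
    rw [rpow_add' (hf i hi) (by linarith), rpow_one]
  have rpow_rpow_inv : ∀ i ∈ s, w i * (f i ^ t) ^ (1 / t) = w i * f i := fun i hi => by
    rw [← rpow_mul (hf i hi), mul_one_div_cancel ht0.ne', rpow_one]
  rwa [sum_congr rfl mul_rpow_self, sum_congr rfl rpow_rpow_inv,
    one_div_one_div, one_div_one_div] at holder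

theorem mul_rpow_neg_le_of_le_mul_rpow {a b c t : ℝ} (hb : 0 ≤ b) (hc : 0 ≤ c)
    (h : a ≤ c * b ^ t) : a * b ^ (-t) ≤ c := by
  rcases hb.eq_or_lt with rfl | hb
  -- at `b = 0`, Mathlib's convention `0 ^ x = 0` for `x ≠ 0` makes the left side `0`
  · rcases eq_or_ne t 0 with rfl | ht
    · simpa using h
    · simpa [zero_rpow (neg_ne_zero.2 ht)] using hc
  · calc a * b ^ (-t) ≤ c * b ^ t * b ^ (-t) :=
          mul_le_mul_of_nonneg_right h (rpow_nonneg hb.le _)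
      _ = c := by rw [mul_assoc, ← rpow_add hb, add_neg_cancel, rpow_zero, mul_one]

theorem exp_psi_le_exp_phi_general {X Y : Type*} [Fintype X] [Fintype Y]
    (W : X → Y → ℝ) (hW : ∀ x y, 0 ≤ W x y)
    (p : X → ℝ) (hp : ∀ x, 0 ≤ p x)
    (s : ℝ) (hs0 : 0 < s) (hs1 : s < 1) :
    ∑ y, (∑ x, p x * W x y ^ (1 + s)) * (∑ x, p x * W x y) ^ (-s)
      ≤ ∑ y, (∑ x, p x * W x y ^ (1 / (1 - s))) ^ (1 - s) := by
  refine sum_le_sum fun y _ => mul_rpow_neg_le_of_le_mul_rpow ?_ ?_ ?_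
  · exact sum_nonneg fun x _ => mul_nonneg (hp x) (hW x y)
  · exact rpow_nonneg (sum_nonneg fun x _ => mul_nonneg (hp x) (rpow_nonneg (hW x y) _)) _
  · exact sum_mul_rpow_one_add_le univ (fun x _ => hp x) (fun x _ => hW x y) hs0 hs1

/-- Comparison of the two exponents (Section IV): for any channel `W`, input
distribution `p`, and `s ∈ (0,1)`, `e^{ψ(s|W,p)} ≤ e^{φ(s|W,p)}`, i.e.
`∑_y (∑_x p(x) W_x(y)^{1+s}) W_p(y)^{−s} ≤ ∑_y (∑_x p(x) W_x(y)^{1/(1−s)})^{1−s}`. -/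
theorem exp_psi_le_exp_phi {X Y : Type*} [Fintype X] [Fintype Y]
    (W : X → Y → ℝ) (hW : ∀ x y, 0 ≤ W x y) (hW1 : ∀ x, ∑ y, W x y = 1)
    (p : X → ℝ) (hp : ∀ x, 0 ≤ p x) (hp1 : ∑ x, p x = 1)
    (s : ℝ) (hs0 : 0 < s) (hs1 : s < 1) :
    ∑ y, (∑ x, p x * W x y ^ (1 + s)) * (∑ x, p x * W x y) ^ (-s)
      ≤ ∑ y, (∑ x, p x * W x y ^ (1 / (1 - s))) ^ (1 - s) :=
  exp_psi_le_exp_phi_general W hW p hp s hs0 hs1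
end

section
/- If the channel W is additive on a finite abelian group X, i.e., W_x(z) = P(z − x) for a fixed probability distribution P on X, then for the uniform input distribution p_mix one has e^{ψ(s|W,p_mix)} = |X|^s · e^{−H̃_{1+s}(P)} and e^{φ(t|W,p_mix)} = |X|^t · e^{−(1−t)·H̃_{1+t/(1−t)}(P)}, where H̃_{1+u}(P) = −log ∑_z P(z)^{1+u}. -/
open Real Finset

/-! Averaging the translates `P (z - ·)` of `P` uniformly gives, for every output `z`, the same
value `|X|⁻¹ ∑ P ^ a`, so each sum over `z` has `|X|` equal terms, and the powers of `|X|`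
collect into `|X| ^ s` and `|X| ^ t`. -/

theorem sum_uniform_mul_comp_sub_left {X : Type*} [Fintype X] [AddGroup X] (f : X → ℝ)
    (z : X) :
    ∑ x, (Fintype.card X : ℝ)⁻¹ * f (z - x) = (Fintype.card X : ℝ)⁻¹ * ∑ x, f x := by
  rw [← mul_sum, Fintype.sum_equiv (Equiv.subLeft z) (fun x => f (z - x)) f fun _ => rfl]

theorem mul_inv_rpow_one_sub {c : ℝ} (hc : 0 < c) (t : ℝ) : c * c⁻¹ ^ (1 - t) = c ^ t := by
  rw [inv_rpow hc.le, ← rpow_neg hc.le, mul_comm, ← rpow_add_one hc.ne']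
  ring_nf

theorem additive_channel_psi_phi_general {X : Type*} [Fintype X] [AddCommGroup X]
    (P : X → ℝ) (hP : ∀ z, 0 ≤ P z) (hP1 : ∑ z, P z = 1)
    (s t : ℝ) (ht1 : t < 1) :
    (∑ z, (∑ x, (Fintype.card X : ℝ)⁻¹ * P (z - x) ^ (1 + s)) *
        (∑ x, (Fintype.card X : ℝ)⁻¹ * P (z - x)) ^ (-s)
      = (Fintype.card X : ℝ) ^ s * (∑ z, P z ^ (1 + s)))
    ∧ (∑ z, (∑ x, (Fintype.card X : ℝ)⁻¹ * P (z - x) ^ (1 / (1 - t))) ^ (1 - t)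
      = (Fintype.card X : ℝ) ^ t * (∑ z, P z ^ (1 + t / (1 - t))) ^ (1 - t)) := by
  have hc : (0 : ℝ) < Fintype.card X := by exact_mod_cast Fintype.card_pos
  have hmix (a : ℝ) (z : X) :
      ∑ x, (Fintype.card X : ℝ)⁻¹ * P (z - x) ^ a = (Fintype.card X : ℝ)⁻¹ * ∑ w, P w ^ a :=
    sum_uniform_mul_comp_sub_left (fun w => P w ^ a) z
  simp only [hmix, sum_uniform_mul_comp_sub_left P, hP1, sum_const, card_univ, nsmul_eq_mul]
  have hexp : 1 + t / (1 - t) = 1 / (1 - t) := by field_simp [sub_ne_zero.mpr ht1.ne']; ring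
  have hsum_nonneg : 0 ≤ ∑ z, P z ^ (1 / (1 - t)) := sum_nonneg fun z _ => rpow_nonneg (hP z) _
  constructor
  · rw [mul_one, inv_rpow hc.le, rpow_neg hc.le, inv_inv]
    field_simp
  · rw [hexp, mul_rpow (inv_nonneg.mpr hc.le) hsum_nonneg, ← mul_assoc,
      mul_inv_rpow_one_sub hc]

/-- Equation (12-26-2): for an additive channel `W_x(z) = P(z − x)` on a finite
abelian group `X` and the uniform input `p_mix`,
`e^{ψ(s|W,p_mix)} = |X|^s · e^{−H̃_{1+s}(P)}` and
`e^{φ(t|W,p_mix)} = |X|^t · e^{−(1−t)·H̃_{1+t/(1−t)}(P)}`, where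
`e^{−H̃_{1+u}(P)} = ∑_z P(z)^{1+u}`. -/
theorem additive_channel_psi_phi {X : Type*} [Fintype X] [AddCommGroup X]
    (P : X → ℝ) (hP : ∀ z, 0 ≤ P z) (hP1 : ∑ z, P z = 1)
    (s t : ℝ) (hs0 : 0 ≤ s) (hs1 : s ≤ 1) (ht0 : 0 ≤ t) (ht1 : t < 1) :
    (∑ z, (∑ x, (Fintype.card X : ℝ)⁻¹ * P (z - x) ^ (1 + s)) *
        (∑ x, (Fintype.card X : ℝ)⁻¹ * P (z - x)) ^ (-s)
      = (Fintype.card X : ℝ) ^ s * (∑ z, P z ^ (1 + s)))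
    ∧ (∑ z, (∑ x, (Fintype.card X : ℝ)⁻¹ * P (z - x) ^ (1 / (1 - t))) ^ (1 - t)
      = (Fintype.card X : ℝ) ^ t * (∑ z, P z ^ (1 + t / (1 - t))) ^ (1 - t)) :=
  additive_channel_psi_phi_general P hP hP1 s t ht1
end

section
/- For s₀ ≥ 0 satisfying H̃_{1+s₀} − s₀R' = R' − R and (d/ds)H̃_{1+s}|_{s=s₀} = R' (where H̃_{1+s} := H̃_{1+s}(A|E|P^{A,E}) and R' is determined by s₀), one has max_{R' ≥ R} min{max_{s≥0}(H̃_{1+s} − sR'), R' − R} = max_{s≥0} [H̃_{1+s} − sR]/(1+s). -/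
/-!
Writing `P(a,e)^{1+s} P^E(e)^{-s} = exp (log P(a,e) + (log P(a,e) - log P^E(e)) s)` on the support
of `P` exhibits `-H̃_{1+s}` as a log-sum-exp of affine functions of `s`, which is convex by Hölder's
inequality. Hence `H̃_{1+s}` lies below its tangent line at `s₀`, which by the balance condition is
`s ↦ (R'₀ - R) + s R'₀`. This bounds `(H̃_{1+s} - sR)/(1+s)` by `R'₀ - R`, with equality at `s₀`,
and bounds `H̃_{1+s} - sR'` by `R'₀ - R` for `R' ≥ R'₀`; for `R' ≤ R'₀` the term `R' - R` is at
most `R'₀ - R` anyway. So both sides equal `R'₀ - R`.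
-/

open Real Finset

theorem sum_rpow_mul_rpow_le {ι : Type*} (s : Finset ι) {f g : ι → ℝ}
    (hf : ∀ i ∈ s, 0 ≤ f i) (hg : ∀ i ∈ s, 0 ≤ g i) {u v : ℝ} (hu : 0 < u) (hv : 0 < v)
    (huv : u + v = 1) :
    ∑ i ∈ s, f i ^ u * g i ^ v ≤ (∑ i ∈ s, f i) ^ u * (∑ i ∈ s, g i) ^ v := by
  have h := inner_le_Lp_mul_Lq_of_nonneg s (holderConjugate_one_div hu hv huv)
    (fun i hi => rpow_nonneg (hf i hi) u) (fun i hi => rpow_nonneg (hg i hi) v)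
  have hf' : ∀ i ∈ s, (f i ^ u) ^ (1 / u) = f i := fun i hi => by
    rw [← rpow_mul (hf i hi), mul_one_div_cancel hu.ne', rpow_one]
  have hg' : ∀ i ∈ s, (g i ^ v) ^ (1 / v) = g i := fun i hi => by
    rw [← rpow_mul (hg i hi), mul_one_div_cancel hv.ne', rpow_one]
  rwa [sum_congr rfl hf', sum_congr rfl hg', one_div_one_div, one_div_one_div] at h

theorem convexOn_log_sum_exp_affine {ι : Type*} (s : Finset ι) (a b : ι → ℝ) :
    ConvexOn ℝ Set.univ fun t => log (∑ i ∈ s, exp (a i + b i * t)) := by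
  obtain rfl | hs := s.eq_empty_or_nonempty
  · simpa using convexOn_const 0 convex_univ
  have hpos : ∀ t, 0 < ∑ i ∈ s, exp (a i + b i * t) := fun t =>
    sum_pos (fun i _ => exp_pos _) hs
  refine convexOn_iff_forall_pos.2 ⟨convex_univ, fun x _ y _ u v hu hv huv => ?_⟩
  have hsplit : ∀ i, exp (a i + b i * (u * x + v * y))
      = exp (a i + b i * x) ^ u * exp (a i + b i * y) ^ v := fun i => by
    rw [← exp_mul, ← exp_mul, ← exp_add]
    congr 1
    linear_combination (-a i) * huv
  calc log (∑ i ∈ s, exp (a i + b i * (u • x + v • y)))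
      ≤ log ((∑ i ∈ s, exp (a i + b i * x)) ^ u * (∑ i ∈ s, exp (a i + b i * y)) ^ v) := by
        simp only [smul_eq_mul, hsplit]
        exact log_le_log (sum_pos (fun i _ => by positivity) hs)
          (sum_rpow_mul_rpow_le s (fun i _ => (exp_pos _).le) (fun i _ => (exp_pos _).le) hu hv huv)
    _ = u • log (∑ i ∈ s, exp (a i + b i * x)) + v • log (∑ i ∈ s, exp (a i + b i * y)) := by
        rw [log_mul (rpow_pos_of_pos (hpos x) u).ne' (rpow_pos_of_pos (hpos y) v).ne',
          log_rpow (hpos x), log_rpow (hpos y), smul_eq_mul, smul_eq_mul]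

theorem ConcaveOn.le_add_mul_sub_of_hasDerivAt {S : Set ℝ} {f : ℝ → ℝ} {f' x y : ℝ}
    (hf : ConcaveOn ℝ S f) (hx : x ∈ S) (hy : y ∈ S) (hf' : HasDerivAt f f' x) :
    f y ≤ f x + f' * (y - x) := by
  rcases lt_trichotomy x y with hxy | rfl | hyx
  · have h := hf.slope_le_of_hasDerivAt hx hy hxy hf'
    rw [slope_def_field, div_le_iff₀ (sub_pos.2 hxy)] at h
    linarith
  · simp
  · have h := hf.le_slope_of_hasDerivAt hy hx hyx hf'
    rw [slope_def_field, le_div_iff₀ (sub_pos.2 hyx)] at h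
    linarith

section MaxMin

variable {H : ℝ → ℝ} {s₀ d R : ℝ}

theorem isGreatest_image_sub_mul (hs₀ : 0 ≤ s₀)
    (htan : ∀ s, 0 ≤ s → H s ≤ H s₀ + d * (s - s₀)) :
    IsGreatest ((fun s => H s - s * d) '' Set.Ici 0) (H s₀ - s₀ * d) := by
  refine ⟨⟨s₀, hs₀, rfl⟩, ?_⟩
  rintro _ ⟨s, hs, rfl⟩
  linarith [htan s hs]

theorem isGreatest_image_sub_mul_div_one_add (hs₀ : 0 ≤ s₀)
    (htan : ∀ s, 0 ≤ s → H s ≤ H s₀ + d * (s - s₀)) (hbal : H s₀ - s₀ * d = d - R) :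
    IsGreatest ((fun s => (H s - s * R) / (1 + s)) '' Set.Ici 0) (d - R) := by
  refine ⟨⟨s₀, hs₀, ?_⟩, ?_⟩
  · rw [div_eq_iff (by linarith)]
    linear_combination hbal
  · rintro _ ⟨s, hs, rfl⟩
    rw [Set.mem_Ici] at hs
    rw [div_le_iff₀ (by linarith)]
    linarith [htan s hs]

/-- The max-min is attained at `R' = d`, where both terms of the `min` equal `d - R`. -/
theorem isGreatest_min_sSup_image_sub_mul (hs₀ : 0 ≤ s₀)
    (htan : ∀ s, 0 ≤ s → H s ≤ H s₀ + d * (s - s₀)) (hbal : H s₀ - s₀ * d = d - R)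
    (h0 : H 0 = 0) :
    IsGreatest {v | ∃ R', R ≤ R' ∧
      v = min (sSup ((fun s => H s - s * R') '' Set.Ici 0)) (R' - R)} (d - R) := by
  have hinner := isGreatest_image_sub_mul hs₀ htan
  rw [hbal] at hinner
  have hRd : R ≤ d := by linarith [htan 0 le_rfl]
  refine ⟨⟨d, hRd, by rw [hinner.csSup_eq, min_self]⟩, ?_⟩
  rintro _ ⟨R', -, rfl⟩
  rcases le_or_gt R' d with hR' | hR'
  · exact (min_le_right _ _).trans (by linarith)
  · refine (min_le_left _ _).trans (csSup_le ⟨_, 0, Set.self_mem_Ici, rfl⟩ ?_)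
    rintro _ ⟨s, hs, rfl⟩
    linarith [hinner.2 ⟨s, hs, rfl⟩, mul_le_mul_of_nonneg_left hR'.le (Set.mem_Ici.1 hs)]

end MaxMin

section CondRenyi

variable {A E : Type*} [Fintype A] [Fintype E]

/-- `H̃_{1+s}(A|E)` of the joint distribution `P`, indexed by `s` rather than by the order. -/
noncomputable def condRenyiEntropy (P : A × E → ℝ) (s : ℝ) : ℝ :=
  -log (∑ p : A × E, P p ^ (1 + s) * (∑ a, P (a, p.2)) ^ (-s))

theorem condRenyiEntropy_zero {P : A × E → ℝ} (hP1 : ∑ p, P p = 1) :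
    condRenyiEntropy P 0 = 0 := by
  simp [condRenyiEntropy, hP1]

theorem condRenyiEntropy_eq_neg_log_sum_exp {P : A × E → ℝ} (hP : ∀ p, 0 ≤ P p) {s : ℝ}
    (hs : -1 < s) :
    condRenyiEntropy P s = -log (∑ p ∈ univ.filter (0 < P ·),
      exp (log (P p) + (log (P p) - log (∑ a, P (a, p.2))) * s)) := by
  have hsupp : ∀ p ∈ univ, P p ^ (1 + s) * (∑ a, P (a, p.2)) ^ (-s) ≠ 0 → 0 < P p := by
    intro p _ hne
    refine (hP p).lt_of_ne fun h0 => hne ?_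
    rw [← h0, zero_rpow (by linarith), zero_mul]
  rw [condRenyiEntropy, ← sum_filter_of_ne (s := univ) hsupp]
  refine congrArg (fun x => -log x) (sum_congr rfl fun p hp => ?_)
  have hPp : 0 < P p := (mem_filter.1 hp).2
  have hQp : 0 < ∑ a, P (a, p.2) :=
    hPp.trans_le (single_le_sum (f := fun a => P (a, p.2)) (fun a _ => hP _) (mem_univ p.1))
  rw [rpow_def_of_pos hPp, rpow_def_of_pos hQp, ← exp_add]
  ring_nf

theorem concaveOn_condRenyiEntropy {P : A × E → ℝ} (hP : ∀ p, 0 ≤ P p) :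
    ConcaveOn ℝ (Set.Ioi (-1)) (condRenyiEntropy P) :=
  ((convexOn_log_sum_exp_affine _ _ _).subset (Set.subset_univ _) (convex_Ioi _)).neg.congr
    fun _ hs => (condRenyiEntropy_eq_neg_log_sum_exp hP hs).symm

end CondRenyi

/-- Equation (n4-16-6)/(4-16-6): if `s₀ ≥ 0` and `R'₀` satisfy
`H̃_{1+s₀} − s₀·R'₀ = R'₀ − R` and `(d/ds) H̃_{1+s}|_{s=s₀} = R'₀`, then
`max_{R'≥R} min{ max_{s≥0} (H̃_{1+s} − s·R'), R' − R }
  = max_{s≥0} (H̃_{1+s} − s·R)/(1+s)`,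
where `H̃_{1+s} = −log ∑_{a,e} P(a,e)^{1+s} P^E(e)^{−s}`. -/
theorem maxmin_exponent_formula {A E : Type*} [Fintype A] [Fintype E]
    (P : A × E → ℝ) (hP : ∀ p, 0 ≤ P p) (hP1 : ∑ p, P p = 1)
    (R s₀ R'₀ : ℝ) (hs₀ : 0 ≤ s₀)
    (hbal : (-Real.log (∑ p : A × E, P p ^ (1 + s₀) * (∑ a, P (a, p.2)) ^ (-s₀)))
        - s₀ * R'₀ = R'₀ - R)
    (hderiv : HasDerivAt
        (fun s : ℝ => -Real.log (∑ p : A × E, P p ^ (1 + s) * (∑ a, P (a, p.2)) ^ (-s)))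
        R'₀ s₀) :
    sSup {v : ℝ | ∃ R' : ℝ, R ≤ R' ∧
        v = min (sSup ((fun s : ℝ =>
            (-Real.log (∑ p : A × E, P p ^ (1 + s) * (∑ a, P (a, p.2)) ^ (-s))) - s * R')
          '' Set.Ici 0)) (R' - R)}
      = sSup ((fun s : ℝ =>
          ((-Real.log (∑ p : A × E, P p ^ (1 + s) * (∑ a, P (a, p.2)) ^ (-s))) - s * R)
            / (1 + s)) '' Set.Ici 0) := by
  have hconcave : ConcaveOn ℝ (Set.Ici 0) (condRenyiEntropy P) :=
    (concaveOn_condRenyiEntropy hP).subset (Set.Ici_subset_Ioi.2 (by norm_num)) (convex_Ici 0)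
  have htan : ∀ s, 0 ≤ s → condRenyiEntropy P s ≤ condRenyiEntropy P s₀ + R'₀ * (s - s₀) :=
    fun s hs => hconcave.le_add_mul_sub_of_hasDerivAt hs₀ hs hderiv
  exact (isGreatest_min_sSup_image_sub_mul hs₀ htan hbal (condRenyiEntropy_zero hP1)).csSup_eq.trans
    (isGreatest_image_sub_mul_div_one_add hs₀ htan hbal).csSup_eq.symm
end

section
/- Let F_q be a finite field, m > k ≥ 1, and let the random (m−k) × m matrix over F_q be (X | I), where I is the (m−k)×(m−k) identity and X is the (m−k)×k Toeplitz matrix built from m−1 i.i.d. uniform entries X₁,…,X_{m−1} via X_{i,j} = X_{i+j−1}. Then: (1) any nonzero vector (x,y) ∈ F_q^k ⊕ F_q^{m−k} with x ≠ 0 lies in the kernel of (X|I) with probability exactly q^{−(m−k)}; (2) any vector (0,y) with y ≠ 0 never lies in the kernel. -/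
open Finset

/-- Back-substitution: `backsub w c d i = (w i - ∑_{i' < i} backsub w c d i' * c (i - i')) / d`. -/
noncomputable def backsub {F : Type*} [Field F] (w c : ℕ → F) (d : F) : ℕ → F
  | i => (w i - ∑ i' : Fin i, backsub w c d i'.val * c (i - i'.val)) / d
  decreasing_by exact i'.isLt

lemma backsub_spec {F : Type*} [Field F] (w c : ℕ → F) (d : F) (hd : d ≠ 0) (i : ℕ) :
    backsub w c d i * d + ∑ i' ∈ Finset.range i, backsub w c d i' * c (i - i') = w i := by
  rw [backsub]
  rw [Fin.sum_univ_eq_sum_range (fun i' => backsub w c d i' * c (i - i')) i]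
  rw [div_mul_cancel₀ _ hd]
  ring

set_option maxHeartbeats 1600000 in
/-- Appendix II: the concatenation `(X | I)` of a random Toeplitz matrix `X`
(built from `m−1` i.i.d. uniform entries `v : Fin (m−1) → F_q`, with
`X_{i,j} = v_{i+j}`) with the identity is a universal₂ hash family:
(1) a vector `(x,y)` with `x ≠ 0` lies in the kernel (`X·x + y = 0`) for
exactly `q^{k−1}` of the `q^{m−1}` choices of `v`, i.e. with probability
`q^{−(m−k)}`; (2) a vector `(0,y)` with `y ≠ 0` never lies in the kernel. -/
theorem toeplitz_universal₂ {F : Type*} [Field F] [Fintype F] [DecidableEq F]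
    (m k : ℕ) (hk : 1 ≤ k) (hkm : k < m)
    (x : Fin k → F) (y : Fin (m - k) → F) :
    (x ≠ 0 →
      Fintype.card {v : Fin (m - 1) → F //
          ∀ i : Fin (m - k),
            (∑ j : Fin k, v ⟨i.val + j.val, by omega⟩ * x j) + y i = 0}
        = Fintype.card F ^ (k - 1))
    ∧ (x = 0 → y ≠ 0 →
      ¬ ∃ v : Fin (m - 1) → F,
          ∀ i : Fin (m - k),
            (∑ j : Fin k, v ⟨i.val + j.val, by omega⟩ * x j) + y i = 0) := by
  classical
  constructor
  · intro hx
    -- the largest index `t` with `x t ≠ 0`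
    have hs : (Finset.univ.filter fun j => x j ≠ 0).Nonempty := by
      by_contra h
      apply hx
      funext j
      by_contra hj
      exact h ⟨j, Finset.mem_filter.mpr ⟨Finset.mem_univ _, hj⟩⟩
    set t : Fin k := (Finset.univ.filter fun j => x j ≠ 0).max' hs with ht
    have hxt : x t ≠ 0 :=
      (Finset.mem_filter.mp ((Finset.univ.filter fun j => x j ≠ 0).max'_mem hs)).2
    have hmax : ∀ j : Fin k, t < j → x j = 0 := by
      intro j hj
      by_contra h
      exact absurd (Finset.le_max' _ j (Finset.mem_filter.mpr ⟨Finset.mem_univ _, h⟩))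
        (not_le.mpr hj)
    -- extension of `x` to ℕ
    set x' : ℕ → F := fun n => if h : n < k then x ⟨n, h⟩ else 0 with hx'
    have hx'0 : ∀ n, t.val < n → x' n = 0 := by
      intro n hn
      by_cases h : n < k
      · simpa [x', h] using hmax ⟨n, h⟩ hn
      · simp [x', h]
    -- the coefficients for back-substitution
    set c : ℕ → F := fun δ => if δ ≤ t.val then x' (t.val - δ) else 0 with hc
    have hc0 : c 0 = x t := by simp [c, x', t.isLt]
    -- the linear map
    set f : (Fin (m - 1) → F) →ₗ[F] (Fin (m - k) → F) :=
      { toFun := fun v i => ∑ j : Fin k, v ⟨i.val + j.val, by omega⟩ * x j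
        map_add' := by
          intro v w
          funext i
          simp [add_mul, Finset.sum_add_distrib]
        map_smul' := by
          intro a v
          funext i
          simp [Finset.mul_sum, mul_assoc] } with hf
    have hfapp : ∀ (v : Fin (m - 1) → F) (i : Fin (m - k)),
        f v i = ∑ j : Fin k, v ⟨i.val + j.val, by omega⟩ * x j := fun v i => rfl
    -- surjectivity of f
    have hsurj : Function.Surjective f := by
      intro w
      set W : ℕ → F := fun i => if h : i < m - k then w ⟨i, h⟩ else 0 with hW
      set u : ℕ → F := backsub W c (x t) with hu
      set V : ℕ → F := fun l => if t.val ≤ l ∧ l - t.val < m - k then u (l - t.val) else 0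
        with hV
      refine ⟨fun l => V l.val, funext fun i => ?_⟩
      rw [hfapp]
      have step1 : ∑ j : Fin k, V (i.val + j.val) * x j
          = ∑ j ∈ Finset.range k, V (i.val + j) * x' j := by
        rw [← Fin.sum_univ_eq_sum_range (fun j => V (i.val + j) * x' j) k]
        refine Finset.sum_congr rfl fun j _ => ?_
        simp [x', j.isLt]
      have step2 : ∑ j ∈ Finset.range k, V (i.val + j) * x' j
          = ∑ i' ∈ Finset.range (i.val + 1), u i' * c (i.val - i') := by
        have hL : ∑ j ∈ (Finset.range k).filter (fun j => t.val ≤ i.val + j ∧ j ≤ t.val),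
            V (i.val + j) * x' j = ∑ j ∈ Finset.range k, V (i.val + j) * x' j := by
          refine Finset.sum_filter_of_ne ?_
          intro j hj hne
          constructor
          · by_contra h
            apply hne
            have hcond : ¬ (t.val ≤ i.val + j ∧ i.val + j - t.val < m - k) := by omega
            simp [V, hcond]
          · by_contra h
            exact hne (by rw [hx'0 j (by omega)]; ring)
        have hR : ∑ i' ∈ (Finset.range (i.val + 1)).filter (fun i' => i.val ≤ i' + t.val),
            u i' * c (i.val - i') = ∑ i' ∈ Finset.range (i.val + 1), u i' * c (i.val - i') := by
          refine Finset.sum_filter_of_ne ?_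
          intro i' hi' hne
          by_contra h
          apply hne
          have hcond : ¬ (i.val - i' ≤ t.val) := by omega
          simp [c, hcond]
        rw [← hL, ← hR]
        have htk : t.val < k := t.isLt
        have him : i.val < m - k := i.isLt
        refine Finset.sum_nbij' (fun j => i.val + j - t.val) (fun i' => i' + t.val - i.val)
          ?_ ?_ ?_ ?_ ?_
        · intro j hj
          simp only [Finset.mem_filter, Finset.mem_range] at hj ⊢
          omega
        · intro i' hi'
          simp only [Finset.mem_filter, Finset.mem_range] at hi' ⊢
          omega
        · intro j hj
          simp only [Finset.mem_filter, Finset.mem_range] at hj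
          omega
        · intro i' hi'
          simp only [Finset.mem_filter, Finset.mem_range] at hi'
          omega
        · intro j hj
          simp only [Finset.mem_filter, Finset.mem_range] at hj
          have h1 : t.val ≤ i.val + j := hj.2.1
          have h2 : j ≤ t.val := hj.2.2
          have hVv : V (i.val + j) = u (i.val + j - t.val) := by
            have hlt : i.val + j - t.val < m - k := by omega
            simp [V, h1, hlt]
          have hcv : c (i.val - (i.val + j - t.val)) = x' j := by
            have h3 : i.val - (i.val + j - t.val) = t.val - j := by omega
            rw [h3]
            have h4 : t.val - j ≤ t.val := by omega
            have h5 : t.val - (t.val - j) = j := by omega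
            simp [c, h4, h5]
          rw [hVv, hcv]
      have step3 : ∑ i' ∈ Finset.range (i.val + 1), u i' * c (i.val - i') = w i := by
        rw [Finset.sum_range_succ, Nat.sub_self, hc0, add_comm]
        have := backsub_spec W c (x t) hxt i.val
        rw [this]
        simp [W, i.isLt]
      rw [step1, step2, step3]
    -- the fiber over -y
    obtain ⟨v0, hv0⟩ := hsurj (-y)
    have key : ∀ v : Fin (m - 1) → F,
        (∀ i : Fin (m - k), (∑ j : Fin k, v ⟨i.val + j.val, by omega⟩ * x j) + y i = 0)
          ↔ f v = -y := by
      intro v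
      constructor
      · intro h
        funext i
        have := h i
        rw [hfapp]
        simp only [Pi.neg_apply]
        linear_combination this
      · intro h i
        have := congrFun h i
        rw [hfapp] at this
        rw [this]
        simp
    have e : {v : Fin (m - 1) → F //
          ∀ i : Fin (m - k),
            (∑ j : Fin k, v ⟨i.val + j.val, by omega⟩ * x j) + y i = 0}
        ≃ LinearMap.ker f := by
      refine (Equiv.subtypeEquivRight key).trans ?_
      exact
        { toFun := fun v => ⟨v.1 - v0, by
            rw [LinearMap.mem_ker, map_sub, v.2, hv0, sub_self]⟩
          invFun := fun v => ⟨v.1 + v0, by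
            rw [map_add, LinearMap.mem_ker.mp v.2, zero_add, hv0]⟩
          left_inv := fun v => Subtype.ext (sub_add_cancel _ _)
          right_inv := fun v => Subtype.ext (add_sub_cancel_right _ _) }
    rw [Fintype.card_congr e]
    have hrank : Module.finrank F (LinearMap.ker f) = k - 1 := by
      have h1 := LinearMap.finrank_range_add_finrank_ker f
      rw [LinearMap.range_eq_top.mpr hsurj, finrank_top] at h1
      rw [Module.finrank_fin_fun, Module.finrank_fin_fun] at h1
      omega
    rw [Module.card_eq_pow_finrank (K := F) (V := LinearMap.ker f), hrank]
  · rintro hx hy ⟨v, hv⟩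
    apply hy
    funext i
    have := hv i
    simp [hx] at this
    exact this
end
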